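/- arXiv:2008.05391 — 2 statements merged into one kernel-verified Lean document; each statement's English description precedes it below -/
import Mathlib

section
/- Let u_1, …, u_{j+1} be distinct elements of V with prefix sets S_i := {u_1, …, u_i} (S_0 = ∅), and let T ⊆ V be a finset with c(T) > 0 such that for every 0 ≤ i ≤ j and every v ∈ T \ S_i one has f(u_{i+1} ∣ S_i) · c v ≥ f(v ∣ S_i) · c (u_{i+1}). Then for every real x with c(S_j) < x ≤ c(S_{j+1}), it holds that f(S_j) + f(u_{j+1} ∣ S_j) · (x − c(S_j))/c(u_{j+1}) ≥ (1 − exp(−x/c(T))) · f(T). -/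
open Finset Real

/-!
Write `a = f T - f S` for the gap left by a prefix `S` of the greedy sequence and `C = c(T)`.
Submodularity bounds `a` by the sum of the marginal gains `f(v ∣ S)` over `v ∈ T \ S`, and the
greedy ratio rule bounds each of them by `f(u ∣ S) c(v) / c(u)`. Hence spending cost `t` on the
next element `u` (all of `c(u)`, or a fraction of it along the linear interpolation) closes at
least `a t / C` of the gap, i.e. multiplies it by at most `1 - t / C ≤ exp (-t / C)`. Starting
from `f T - f ∅ = f T`, the gap at total cost `x` is at most `f T exp (-x / C)`.
-/

theorem sub_le_mul_exp_of_mul_le {a d s t C E : ℝ} (hC : 0 < C) (ht : 0 ≤ t) (hd : 0 ≤ d)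
    (h : a * t ≤ d * C) (ha : a ≤ E * exp (-s / C)) : a - d ≤ E * exp (-(s + t) / C) := by
  have hstep : a - d ≤ a * exp (-t / C) := by
    rcases le_or_gt 0 a with ha0 | ha0
    · have : a * t / C ≤ d := (div_le_iff₀ hC).2 h
      calc a - d ≤ a * (-t / C + 1) := by linarith [show a * (-t / C + 1) = a - a * t / C by ring]
        _ ≤ a * exp (-t / C) := mul_le_mul_of_nonneg_left (add_one_le_exp _) ha0
    · have : exp (-t / C) ≤ 1 :=
        exp_le_one_iff.2 (div_nonpos_of_nonpos_of_nonneg (neg_nonpos.2 ht) hC.le)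
      nlinarith
  calc a - d ≤ a * exp (-t / C) := hstep
    _ ≤ E * exp (-s / C) * exp (-t / C) := mul_le_mul_of_nonneg_right ha (exp_nonneg _)
    _ = E * exp (-(s + t) / C) := by rw [mul_assoc, ← exp_add]; ring_nf

section SetFunction

variable {V : Type*} [DecidableEq V]

def marginal (f : Finset V → ℝ) (v : V) (S : Finset V) : ℝ := f (insert v S) - f S

variable {f : Finset V → ℝ}

theorem marginal_nonneg (hmono : ∀ S T : Finset V, S ⊆ T → f S ≤ f T) (v : V) (S : Finset V) :
    0 ≤ marginal f v S :=
  sub_nonneg.2 (hmono _ _ (subset_insert v S))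

theorem sub_le_sum_marginal (hsub : ∀ S T : Finset V, f (S ∪ T) + f (S ∩ T) ≤ f S + f T)
    (S A : Finset V) : f (S ∪ A) - f S ≤ ∑ v ∈ A \ S, marginal f v S := by
  induction A using Finset.induction_on with
  | empty => simp
  | insert a A ha ih =>
    by_cases haS : a ∈ S
    · rwa [union_insert, insert_eq_of_mem (mem_union_left _ haS), insert_sdiff_of_mem _ haS]
    · have hunion : insert a S ∪ (S ∪ A) = S ∪ insert a A := by
        rw [insert_union, ← union_assoc, union_self, union_insert]
      have hinter : insert a S ∩ (S ∪ A) = S := by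
        rw [insert_inter_of_notMem (by simp [ha, haS]), inter_eq_left.2 subset_union_left]
      have h := hsub (insert a S) (S ∪ A)
      rw [hunion, hinter] at h
      rw [insert_sdiff_of_notMem _ haS, sum_insert (by simp [ha]), marginal]
      linarith

theorem sub_mul_le_marginal_mul_sum_of_forall_le {c : V → ℝ} {S T : Finset V} {u : V}
    (hmono : ∀ S T : Finset V, S ⊆ T → f S ≤ f T)
    (hsub : ∀ S T : Finset V, f (S ∪ T) + f (S ∩ T) ≤ f S + f T) (hc : ∀ v, 0 ≤ c v)
    (hu : ∀ v ∈ T \ S, marginal f v S * c u ≤ marginal f u S * c v) :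
    (f T - f S) * c u ≤ marginal f u S * ∑ v ∈ T, c v :=
  calc (f T - f S) * c u ≤ (∑ v ∈ T \ S, marginal f v S) * c u := by
        gcongr
        · exact hc u
        · linarith [sub_le_sum_marginal hsub S T, hmono T (S ∪ T) subset_union_right]
    _ ≤ ∑ v ∈ T \ S, marginal f u S * c v := by
        rw [sum_mul]
        exact sum_le_sum hu
    _ ≤ marginal f u S * ∑ v ∈ T, c v := by
        rw [← mul_sum]
        exact mul_le_mul_of_nonneg_left
          (sum_le_sum_of_subset_of_nonneg sdiff_subset fun v _ _ ↦ hc v)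
          (marginal_nonneg hmono u S)

theorem apply_notMem_image_range {u : ℕ → V} {i j : ℕ} (hu : Set.InjOn u (range (j + 1)))
    (hi : i ≤ j) : u i ∉ (range i).image u := by
  intro h
  obtain ⟨k, hk, hki⟩ := mem_image.1 h
  rw [mem_range] at hk
  exact hk.ne (hu (by simp; omega) (by simp; omega) hki)

theorem sub_le_mul_exp_of_greedy_prefix {f : Finset V → ℝ} {c : V → ℝ} {u : ℕ → V} {j : ℕ}
    {T : Finset V} (hf0 : f ∅ = 0) (hmono : ∀ S T : Finset V, S ⊆ T → f S ≤ f T)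
    (hsub : ∀ S T : Finset V, f (S ∪ T) + f (S ∩ T) ≤ f S + f T) (hc : ∀ v, 0 < c v)
    (hT : 0 < ∑ v ∈ T, c v) (hu : Set.InjOn u (range (j + 1)))
    (hgreedy : ∀ i ≤ j, ∀ v ∈ T \ (range i).image u,
      marginal f v ((range i).image u) * c (u i) ≤ marginal f (u i) ((range i).image u) * c v) :
    ∀ i ≤ j, f T - f ((range i).image u) ≤
      f T * exp (-(∑ v ∈ (range i).image u, c v) / ∑ v ∈ T, c v) := by
  intro i
  induction i with
  | zero => simp [hf0]
  | succ i ih =>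
    intro hi
    have key := sub_le_mul_exp_of_mul_le hT (hc (u i)).le (marginal_nonneg hmono (u i) _)
      (sub_mul_le_marginal_mul_sum_of_forall_le hmono hsub (fun v ↦ (hc v).le)
        (hgreedy i (by omega))) (ih (by omega))
    rw [range_add_one, image_insert, sum_insert (apply_notMem_image_range hu (by omega)),
      add_comm]
    rwa [marginal, sub_sub_sub_cancel_right] at key

end SetFunction

theorem stmt6_general {V : Type*} [DecidableEq V]
    (f : Finset V → ℝ) (c : V → ℝ)
    (hf0 : f ∅ = 0)
    (hmono : ∀ S T : Finset V, S ⊆ T → f S ≤ f T)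
    (hsub : ∀ S T : Finset V, f (S ∪ T) + f (S ∩ T) ≤ f S + f T)
    (hcpos : ∀ v : V, 0 < c v)
    (j : ℕ) (u : ℕ → V)
    (hinj : ∀ i i' : ℕ, i < j + 1 → i' < j + 1 → u i = u i' → i = i')
    (S : ℕ → Finset V) (hS : ∀ i : ℕ, S i = (Finset.range i).image u)
    (T : Finset V) (hT : 0 < ∑ v ∈ T, c v)
    (hrule : ∀ i : ℕ, i ≤ j → ∀ v ∈ T \ S i,
      (f (insert (u i) (S i)) - f (S i)) * c v ≥
      (f (insert v (S i)) - f (S i)) * c (u i)) :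
    ∀ x : ℝ, (∑ v ∈ S j, c v) < x → x ≤ ∑ v ∈ S (j + 1), c v →
      f (S j) + (f (insert (u j) (S j)) - f (S j)) * (x - ∑ v ∈ S j, c v) / c (u j) ≥
        (1 - Real.exp (-x / (∑ v ∈ T, c v))) * f T := by
  intro x hx hx'
  obtain rfl : S = fun i ↦ (range i).image u := funext hS
  have hu : Set.InjOn u (range (j + 1)) := fun i hi i' hi' ↦
    hinj i i' (mem_range.1 hi) (mem_range.1 hi')
  simp only [range_add_one, image_insert,
    sum_insert (apply_notMem_image_range hu le_rfl)] at hx'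
  set P := (range j).image u
  set t := x - ∑ v ∈ P, c v
  have hgap := sub_le_mul_exp_of_greedy_prefix hf0 hmono hsub hcpos hT hu hrule j le_rfl
  have hkey := sub_mul_le_marginal_mul_sum_of_forall_le hmono hsub (fun v ↦ (hcpos v).le)
    (hrule j le_rfl)
  have ht : 0 ≤ t := by linarith
  have hcu := hcpos (u j)
  have hrate : (f T - f P) * t ≤ marginal f (u j) P * t / c (u j) * ∑ v ∈ T, c v := by
    rw [div_mul_eq_mul_div, le_div_iff₀ hcu]
    linarith [mul_le_mul_of_nonneg_right hkey ht]
  have hgap_x := sub_le_mul_exp_of_mul_le hT ht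
    (div_nonneg (mul_nonneg (marginal_nonneg hmono (u j) P) ht) hcu.le) hrate hgap
  rw [show ∑ v ∈ P, c v + t = x by ring, marginal] at hgap_x
  linarith

/-- Lemma 3.5 (continuous extension): for c(S_j) < x ≤ c(S_{j+1}),
F(x) = f(S_j) + f(u_{j+1}∣S_j)·(x − c(S_j))/c(u_{j+1}) ≥ (1 − exp(−x/c(T)))·f(T). -/
theorem stmt6 {V : Type*} [Fintype V] [DecidableEq V]
    (f : Finset V → ℝ) (c : V → ℝ)
    (hf0 : f ∅ = 0)
    (hmono : ∀ S T : Finset V, S ⊆ T → f S ≤ f T)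
    (hsub : ∀ S T : Finset V, f (S ∪ T) + f (S ∩ T) ≤ f S + f T)
    (hcpos : ∀ v : V, 0 < c v)
    (j : ℕ) (u : ℕ → V)
    (hinj : ∀ i i' : ℕ, i < j + 1 → i' < j + 1 → u i = u i' → i = i')
    (S : ℕ → Finset V) (hS : ∀ i : ℕ, S i = (Finset.range i).image u)
    (T : Finset V) (hT : 0 < ∑ v ∈ T, c v)
    (hrule : ∀ i : ℕ, i ≤ j → ∀ v ∈ T \ S i,
      (f (insert (u i) (S i)) - f (S i)) * c v ≥
      (f (insert v (S i)) - f (S i)) * c (u i)) :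
    ∀ x : ℝ, (∑ v ∈ S j, c v) < x → x ≤ ∑ v ∈ S (j + 1), c v →
      f (S j) + (f (insert (u j) (S j)) - f (S j)) * (x - ∑ v ∈ S j, c v) / c (u j) ≥
        (1 - Real.exp (-x / (∑ v ∈ T, c v))) * f T :=
  stmt6_general f c hf0 hmono hsub hcpos j u hinj S hS T hT hrule
end

section
/- For every run of the modified greedy algorithm, every OPT ⊆ V with c(OPT) ≤ b, and every real α' with 0.357 < α' < 1 and (1 − α')·(ln(1 − α') + 2) − 1 = 0, it holds that f(OPT) ≤ Λ and α' · Λ ≤ f(S_m), where Λ := min over 0 ≤ i ≤ n of ( f(A i) + Δ(b∣A i) ). -/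
/-!
For every `i`, `f OPT ≤ f (A i ∪ OPT)` is at most `f (A i)` plus the marginal gains of `OPT` over
`A i`, and the indicator of `OPT` is feasible for the relaxation, so `f OPT ≤ Λ`.

As long as no element has been rejected, every element outside `A i` is offered at step `i` or
later, so by the greedy rule `u i` has the best gain per unit cost and
`Δ(b∣A i) ≤ b f(u i∣A i) / c (u i)`. Hence the gap `Λ - f (A i)` shrinks by a factor
`1 - c (u i) / b ≤ exp (-c (u i) / b)` at each step, and `Λ - f (A i) ≤ Λ exp (-c (A i) / b)`.
If no element is ever rejected, `A n = V` and `Λ ≤ f V`. Otherwise, at the first rejected element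
`u i`, either `f (A i) ≥ α Λ`, or the budget spent is below `-b log (1 - α)`; then
`c (u i) > b (1 + log (1 - α))` and `f {u i} ≥ f(u i∣A i) ≥ (1 - α) (1 + log (1 - α)) Λ`,
which is `α Λ` by the choice of `α`.
-/

open Finset Real

section SetFunction

variable {V : Type*} [DecidableEq V] {f : Finset V → ℝ}

theorem marginal_antitone (hmono : ∀ S T : Finset V, S ⊆ T → f S ≤ f T)
    (hsub : ∀ S T : Finset V, f (S ∪ T) + f (S ∩ T) ≤ f S + f T)
    {S T : Finset V} (hST : S ⊆ T) (a : V) :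
    f (insert a T) - f T ≤ f (insert a S) - f S := by
  have h := hsub (insert a S) T
  rw [insert_union, union_eq_right.mpr hST] at h
  have := hmono _ _ (subset_inter (subset_insert a S) hST)
  linarith

theorem marginal_le_singleton (hf0 : f ∅ = 0) (hmono : ∀ S T : Finset V, S ⊆ T → f S ≤ f T)
    (hsub : ∀ S T : Finset V, f (S ∪ T) + f (S ∩ T) ≤ f S + f T) (S : Finset V) (a : V) :
    f (insert a S) - f S ≤ f {a} := by
  simpa [hf0] using marginal_antitone hmono hsub (empty_subset S) a

theorem le_add_sum_marginal (hmono : ∀ S T : Finset V, S ⊆ T → f S ≤ f T)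
    (hsub : ∀ S T : Finset V, f (S ∪ T) + f (S ∩ T) ≤ f S + f T) (S T : Finset V) :
    f (S ∪ T) ≤ f S + ∑ v ∈ T \ S, (f (insert v S) - f S) := by
  induction T using Finset.induction_on with
  | empty => simp
  | insert a T ha ih =>
    by_cases haS : a ∈ S
    · rwa [union_insert, insert_eq_of_mem (mem_union_left T haS), insert_sdiff_of_mem _ haS]
    · rw [union_insert, insert_sdiff_of_notMem _ haS, sum_insert (by simp [ha])]
      have := marginal_antitone hmono hsub (subset_union_left : S ⊆ S ∪ T) a
      linarith

end SetFunction

section Knapsack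

variable {V : Type*} [Fintype V] [DecidableEq V]

def knapsackValues (f : Finset V → ℝ) (c : V → ℝ) (b : ℝ) (S : Finset V) : Set ℝ :=
  {y : ℝ | ∃ x : V → ℝ, (∀ v : V, 0 ≤ x v ∧ x v ≤ 1) ∧ (∑ v : V, c v * x v ≤ b) ∧
    y = ∑ v ∈ Finset.univ \ S, (f (insert v S) - f S) * x v}

/-- The paper's `Δ(b∣S)`. -/
noncomputable def knapsackGain (f : Finset V → ℝ) (c : V → ℝ) (b : ℝ) (S : Finset V) : ℝ :=
  sSup (knapsackValues f c b S)

variable {f : Finset V → ℝ} {c : V → ℝ} {b : ℝ} {S : Finset V}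

theorem zero_mem_knapsackValues (hb : 0 ≤ b) : (0 : ℝ) ∈ knapsackValues f c b S :=
  ⟨0, fun _ => ⟨le_rfl, zero_le_one⟩, by simpa using hb, by simp⟩

theorem bddAbove_knapsackValues (hmono : ∀ S T : Finset V, S ⊆ T → f S ≤ f T) :
    BddAbove (knapsackValues f c b S) := by
  refine ⟨∑ v ∈ univ \ S, (f (insert v S) - f S), ?_⟩
  rintro y ⟨x, hx, -, rfl⟩
  exact sum_le_sum fun v _ =>
    mul_le_of_le_one_right (sub_nonneg.2 (hmono _ _ (subset_insert v S))) (hx v).2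

theorem knapsackGain_nonneg (hmono : ∀ S T : Finset V, S ⊆ T → f S ≤ f T) (hb : 0 ≤ b) :
    0 ≤ knapsackGain f c b S :=
  le_csSup (bddAbove_knapsackValues hmono) (zero_mem_knapsackValues hb)

theorem knapsackGain_univ (hb : 0 ≤ b) : knapsackGain f c b univ = 0 := by
  rw [knapsackGain, Set.eq_singleton_iff_unique_mem.2 ⟨zero_mem_knapsackValues hb, ?_⟩,
    csSup_singleton]
  rintro y ⟨x, -, -, rfl⟩
  simp

theorem sum_marginal_le_knapsackGain (hmono : ∀ S T : Finset V, S ⊆ T → f S ≤ f T)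
    {T : Finset V} (hT : ∑ v ∈ T, c v ≤ b) :
    ∑ v ∈ T \ S, (f (insert v S) - f S) ≤ knapsackGain f c b S := by
  refine le_csSup (bddAbove_knapsackValues hmono)
    ⟨fun v => if v ∈ T then 1 else 0, fun v => by by_cases h : v ∈ T <;> simp [h], ?_, ?_⟩
  · simpa only [mul_ite, mul_one, mul_zero, sum_ite_mem, univ_inter] using hT
  · simp only [mul_ite, mul_one, mul_zero, sum_ite_mem]
    congr 1
    ext v
    simp only [mem_inter, mem_sdiff, mem_univ, true_and]
    tauto

theorem le_add_knapsackGain (hmono : ∀ S T : Finset V, S ⊆ T → f S ≤ f T)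
    (hsub : ∀ S T : Finset V, f (S ∪ T) + f (S ∩ T) ≤ f S + f T)
    (S : Finset V) {T : Finset V} (hT : ∑ v ∈ T, c v ≤ b) :
    f T ≤ f S + knapsackGain f c b S := by
  have := le_add_sum_marginal hmono hsub S T
  have := hmono T (S ∪ T) subset_union_right
  have := sum_marginal_le_knapsackGain (S := S) hmono hT
  linarith

theorem knapsackGain_mul_le_of_density (hmono : ∀ S T : Finset V, S ⊆ T → f S ≤ f T)
    (hb : 0 ≤ b) (hc : ∀ v, 0 ≤ c v) {w : V} (hw : 0 < c w)
    (hdens : ∀ v ∉ S, (f (insert v S) - f S) * c w ≤ (f (insert w S) - f S) * c v) :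
    knapsackGain f c b S * c w ≤ b * (f (insert w S) - f S) := by
  set r := (f (insert w S) - f S) / c w
  have hr : 0 ≤ r := div_nonneg (sub_nonneg.2 (hmono _ _ (subset_insert w S))) hw.le
  suffices knapsackGain f c b S ≤ r * b by
    calc knapsackGain f c b S * c w ≤ r * b * c w := mul_le_mul_of_nonneg_right this hw.le
      _ = b * (f (insert w S) - f S) := by simp only [r]; field_simp
  refine csSup_le ⟨0, zero_mem_knapsackValues hb⟩ ?_
  rintro y ⟨x, hx, hxb, rfl⟩
  calc ∑ v ∈ univ \ S, (f (insert v S) - f S) * x v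
      ≤ ∑ v ∈ univ \ S, r * (c v * x v) := sum_le_sum fun v hv => by
        rw [← mul_assoc]
        refine mul_le_mul_of_nonneg_right ?_ (hx v).1
        rw [div_mul_eq_mul_div, le_div_iff₀ hw]
        exact hdens v (mem_sdiff.1 hv).2
    _ ≤ ∑ v, r * (c v * x v) := sum_le_sum_of_subset_of_nonneg (subset_univ _)
        fun v _ _ => mul_nonneg hr (mul_nonneg (hc v) (hx v).1)
    _ = r * ∑ v, c v * x v := (mul_sum _ _ _).symm
    _ ≤ r * b := mul_le_mul_of_nonneg_left hxb hr

end Knapsack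

theorem gap_le_mul_exp_succ {Λ b F F' C C' d : ℝ} (hΛ : 0 ≤ Λ) (hb : 0 < b) (hF : F ≤ F')
    (hC : C' ≤ C + d) (hstep : (Λ - F) * d ≤ b * (F' - F))
    (ih : Λ - F ≤ Λ * exp (-C / b)) :
    Λ - F' ≤ Λ * exp (-C' / b) := by
  have hexpC : Λ * exp (-(C + d) / b) ≤ Λ * exp (-C' / b) :=
    mul_le_mul_of_nonneg_left (exp_le_exp.2 (div_le_div_of_nonneg_right (by linarith) hb.le)) hΛ
  rcases le_or_gt (Λ - F) 0 with hgap | hgap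
  · linarith [mul_nonneg hΛ (exp_pos (-(C + d) / b)).le]
  have hgain : (Λ - F) * d / b ≤ F' - F := by rw [div_le_iff₀ hb]; linarith
  calc Λ - F' ≤ (Λ - F) * (1 - d / b) := by rw [mul_one_sub, mul_div_assoc']; linarith
    _ ≤ (Λ - F) * exp (-(d / b)) :=
        mul_le_mul_of_nonneg_left (by linarith [add_one_le_exp (-(d / b))]) hgap.le
    _ ≤ Λ * exp (-C / b) * exp (-(d / b)) := mul_le_mul_of_nonneg_right ih (exp_pos _).le
    _ = Λ * exp (-(C + d) / b) := by rw [mul_assoc, ← exp_add]; ring_nf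
    _ ≤ Λ * exp (-C' / b) := hexpC

theorem mul_le_max_of_budget_exceeded {α Λ b F M C d : ℝ} (hα : α < 1)
    (hroot : (1 - α) * (log (1 - α) + 2) - 1 = 0) (hΛ : 0 ≤ Λ) (hb : 0 < b) (hF : 0 ≤ F)
    (hgap : Λ - F ≤ Λ * exp (-C / b)) (hover : b < C + d) (hstep : (Λ - F) * d ≤ b * M) :
    α * Λ ≤ max F M := by
  rcases le_or_gt (α * Λ) F with hαF | hαF
  · exact le_max_of_le_left hαF
  refine le_max_of_le_right ?_
  have h1α : 0 < 1 - α := by linarith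
  have hαpos : 0 < α := pos_of_mul_pos_left (hF.trans_lt hαF) hΛ
  have hfixed : (1 - α) * (1 + log (1 - α)) = α := by linear_combination hroot
  have hlog : 0 < 1 + log (1 - α) := pos_of_mul_pos_right (hfixed.symm ▸ hαpos) h1α.le
  have hgap' : (1 - α) * Λ < Λ - F := by linarith
  have hexp : 1 - α < exp (-C / b) := lt_of_mul_lt_mul_right (by linarith) hΛ
  have hC : C < -log (1 - α) * b := by
    have := (log_lt_iff_lt_exp h1α).2 hexp
    rw [neg_div, lt_neg, div_lt_iff₀ hb] at this
    linarith
  have hd : b * (1 + log (1 - α)) < d := by linarith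
  refine (lt_of_mul_lt_mul_left ?_ hb.le).le
  calc b * (α * Λ) = (1 - α) * Λ * (b * (1 + log (1 - α))) := by linear_combination -(Λ * b) * hfixed
    _ < (Λ - F) * d := mul_lt_mul'' hgap' hd (by positivity) (by positivity)
    _ ≤ b * M := hstep

section GreedyRun

variable {V : Type*} [DecidableEq V] {n : ℕ}

def Accepted (c : V → ℝ) (b : ℝ) (u : Fin n → V) (A : Fin (n + 1) → Finset V) (i : Fin n) :
    Prop :=
  (∑ v ∈ A i.castSucc, c v) + c (u i) ≤ b

def IsBudgetedRun (c : V → ℝ) (b : ℝ) (u : Fin n → V) (A : Fin (n + 1) → Finset V) : Prop :=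
  A 0 = ∅ ∧ ∀ i : Fin n, (Accepted c b u A i → A i.succ = insert (u i) (A i.castSucc)) ∧
    (¬ Accepted c b u A i → A i.succ = A i.castSucc)

def IsGreedyOrder (f : Finset V → ℝ) (c : V → ℝ) (u : Fin n → V) (A : Fin (n + 1) → Finset V) :
    Prop :=
  ∀ i j : Fin n, i ≤ j →
    (f (insert (u i) (A i.castSucc)) - f (A i.castSucc)) * c (u j) ≥
    (f (insert (u j) (A i.castSucc)) - f (A i.castSucc)) * c (u i)

variable {f : Finset V → ℝ} {c : V → ℝ} {b : ℝ} {u : Fin n → V} {A : Fin (n + 1) → Finset V}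

namespace IsBudgetedRun

theorem monotone (hrun : IsBudgetedRun c b u A) : Monotone A :=
  Fin.monotone_iff_le_succ.2 fun i => by
    by_cases h : Accepted c b u A i
    · rw [(hrun.2 i).1 h]
      exact subset_insert _ _
    · rw [(hrun.2 i).2 h]

theorem mem_of_accepted (hrun : IsBudgetedRun c b u A) {k : Fin (n + 1)}
    (hacc : ∀ j : Fin n, j.castSucc < k → Accepted c b u A j) {j : Fin n} (hj : j.castSucc < k) :
    u j ∈ A k := by
  induction k using Fin.induction with
  | zero => exact absurd hj (Fin.not_lt_zero _)
  | succ k ih =>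
    rw [(hrun.2 k).1 (hacc k k.castSucc_lt_succ)]
    rcases (Fin.castSucc_lt_succ_iff.1 hj).lt_or_eq with hjk | rfl
    · exact mem_insert_of_mem
        (ih (fun i hi => hacc i (hi.trans k.castSucc_lt_succ))
          (Fin.castSucc_lt_castSucc_iff.2 hjk))
    · exact mem_insert_self _ _

variable [Fintype V]

theorem last_eq_univ (hrun : IsBudgetedRun c b u A) (hu : Function.Surjective u)
    (hacc : ∀ j, Accepted c b u A j) : A (Fin.last n) = univ :=
  eq_univ_of_forall fun v => by
    obtain ⟨j, rfl⟩ := hu v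
    exact hrun.mem_of_accepted (fun j _ => hacc j) (Fin.castSucc_lt_last j)

theorem gap_mul_cost_le (hrun : IsBudgetedRun c b u A) (hu : Function.Surjective u)
    (hgreedy : IsGreedyOrder f c u A) (hmono : ∀ S T : Finset V, S ⊆ T → f S ≤ f T)
    (hb : 0 ≤ b) (hc : ∀ v, 0 < c v) {Λ : ℝ} {i : Fin n}
    (hacc : ∀ j : Fin n, j < i → Accepted c b u A j)
    (hΛ : Λ ≤ f (A i.castSucc) + knapsackGain f c b (A i.castSucc)) :
    (Λ - f (A i.castSucc)) * c (u i) ≤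
      b * (f (insert (u i) (A i.castSucc)) - f (A i.castSucc)) := by
  have hdens : ∀ v ∉ A i.castSucc, (f (insert v (A i.castSucc)) - f (A i.castSucc)) * c (u i) ≤
      (f (insert (u i) (A i.castSucc)) - f (A i.castSucc)) * c v := by
    intro v hv
    obtain ⟨j, rfl⟩ := hu v
    rcases lt_or_ge j i with hji | hij
    · refine absurd (hrun.mem_of_accepted (fun k hk => hacc k ?_) ?_) hv
      · exact Fin.castSucc_lt_castSucc_iff.1 hk
      · exact Fin.castSucc_lt_castSucc_iff.2 hji
    · exact hgreedy i j hij
  calc (Λ - f (A i.castSucc)) * c (u i) ≤ knapsackGain f c b (A i.castSucc) * c (u i) :=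
        mul_le_mul_of_nonneg_right (by linarith) (hc _).le
    _ ≤ _ := knapsackGain_mul_le_of_density hmono hb (fun v => (hc v).le) (hc _) hdens

theorem gap_le_mul_exp (hrun : IsBudgetedRun c b u A) (hu : Function.Surjective u)
    (hgreedy : IsGreedyOrder f c u A) (hf0 : f ∅ = 0)
    (hmono : ∀ S T : Finset V, S ⊆ T → f S ≤ f T) (hb : 0 < b) (hc : ∀ v, 0 < c v) {Λ : ℝ}
    (hΛ0 : 0 ≤ Λ) (hΛ : ∀ k, Λ ≤ f (A k) + knapsackGain f c b (A k)) {k : Fin (n + 1)}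
    (hacc : ∀ j : Fin n, j.castSucc < k → Accepted c b u A j) :
    Λ - f (A k) ≤ Λ * exp (-(∑ v ∈ A k, c v) / b) := by
  induction k using Fin.induction with
  | zero => simp [hrun.1, hf0]
  | succ k ih =>
    have hsucc := (hrun.2 k).1 (hacc k k.castSucc_lt_succ)
    have hcost : ∑ v ∈ A k.succ, c v ≤ ∑ v ∈ A k.castSucc, c v + c (u k) := by
      rw [hsucc]
      by_cases hk : u k ∈ A k.castSucc
      · rw [insert_eq_of_mem hk]
        linarith [hc (u k)]
      · rw [sum_insert hk, add_comm]
    refine gap_le_mul_exp_succ hΛ0 hb (hmono _ _ (hrun.monotone (Fin.castSucc_le_succ k))) hcost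
      ?_ (ih fun j hj => hacc j (hj.trans k.castSucc_lt_succ))
    rw [hsucc]
    exact hrun.gap_mul_cost_le hu hgreedy hmono hb.le hc
      (fun j hj => hacc j (Fin.castSucc_lt_succ_iff.2 hj.le)) (hΛ _)

end IsBudgetedRun

end GreedyRun

theorem stmt11_general {V : Type*} [Fintype V] [DecidableEq V] [Nonempty V]
    (f : Finset V → ℝ) (c : V → ℝ) (b : ℝ)
    (hf0 : f ∅ = 0)
    (hmono : ∀ S T : Finset V, S ⊆ T → f S ≤ f T)
    (hsub : ∀ S T : Finset V, f (S ∪ T) + f (S ∩ T) ≤ f S + f T)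
    (hcpos : ∀ v : V, 0 < c v)
    (hb : 0 < b)
    (u : Fin (Fintype.card V) → V) (hu : Function.Bijective u)
    (A : Fin (Fintype.card V + 1) → Finset V)
    (hA0 : A 0 = ∅)
    (hstep : ∀ i : Fin (Fintype.card V),
      ((∑ v ∈ A i.castSucc, c v) + c (u i) ≤ b →
        A i.succ = insert (u i) (A i.castSucc)) ∧
      (¬ ((∑ v ∈ A i.castSucc, c v) + c (u i) ≤ b) →
        A i.succ = A i.castSucc))
    (hgreedy : ∀ i j : Fin (Fintype.card V), i ≤ j →
      (f (insert (u i) (A i.castSucc)) - f (A i.castSucc)) * c (u j) ≥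
      (f (insert (u j) (A i.castSucc)) - f (A i.castSucc)) * c (u i))
    (OPT : Finset V) (hOPT : ∑ v ∈ OPT, c v ≤ b)
    (α : ℝ) (hα2 : α < 1)
    (hαroot : (1 - α) * (Real.log (1 - α) + 2) - 1 = 0) :
    f OPT ≤ Finset.univ.inf' Finset.univ_nonempty
      (fun i : Fin (Fintype.card V + 1) => f (A i) + sSup {y : ℝ | ∃ x : V → ℝ,
        (∀ v : V, 0 ≤ x v ∧ x v ≤ 1) ∧
        (∑ v : V, c v * x v ≤ b) ∧
        y = ∑ v ∈ Finset.univ \ A i, (f (insert v (A i)) - f (A i)) * x v}) ∧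
    α * Finset.univ.inf' Finset.univ_nonempty
      (fun i : Fin (Fintype.card V + 1) => f (A i) + sSup {y : ℝ | ∃ x : V → ℝ,
        (∀ v : V, 0 ≤ x v ∧ x v ≤ 1) ∧
        (∑ v : V, c v * x v ≤ b) ∧
        y = ∑ v ∈ Finset.univ \ A i, (f (insert v (A i)) - f (A i)) * x v}) ≤
    max (f (A (Fin.last (Fintype.card V))))
      (Finset.univ.sup' Finset.univ_nonempty fun v : V => f {v}) := by
  set Λ := univ.inf' univ_nonempty fun i => f (A i) + knapsackGain f c b (A i)
  show f OPT ≤ Λ ∧ α * Λ ≤ _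
  have hrun : IsBudgetedRun c b u A := ⟨hA0, hstep⟩
  have hΛ : ∀ i, Λ ≤ f (A i) + knapsackGain f c b (A i) := fun i => inf'_le _ (mem_univ i)
  have hfnn : ∀ S, 0 ≤ f S := fun S => hf0 ▸ hmono ∅ S (empty_subset S)
  have hΛ0 : 0 ≤ Λ := le_inf' _ _ fun i _ => add_nonneg (hfnn _) (knapsackGain_nonneg hmono hb.le)
  refine ⟨le_inf' _ _ fun i _ => le_add_knapsackGain hmono hsub (A i) hOPT, ?_⟩
  by_cases hall : ∀ j, Accepted c b u A j
  · have hlast := hΛ (Fin.last _)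
    rw [hrun.last_eq_univ hu.2 hall] at hlast ⊢
    rw [knapsackGain_univ hb.le, add_zero] at hlast
    exact le_max_of_le_left ((mul_le_of_le_one_left hΛ0 hα2.le).trans hlast)
  obtain ⟨ℓ, hrej, hfirst⟩ := WellFounded.has_min wellFounded_lt _ (not_forall.1 hall)
  have hacc : ∀ j < ℓ, Accepted c b u A j := fun j hj => by_contra fun h => hfirst j h hj
  refine (mul_le_max_of_budget_exceeded hα2 hαroot hΛ0 hb (hfnn _)
    (hrun.gap_le_mul_exp hu.2 hgreedy hf0 hmono hb hcpos hΛ0 hΛ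
      fun j hj => hacc j (Fin.castSucc_lt_castSucc_iff.1 hj))
    (not_le.1 hrej) (hrun.gap_mul_cost_le hu.2 hgreedy hmono hb.le hcpos hacc (hΛ _))).trans
    (max_le_max (hmono _ _ (hrun.monotone (Fin.le_last _))) ?_)
  exact (marginal_le_singleton hf0 hmono hsub _ _).trans (le_sup' (fun v => f {v}) (mem_univ _))

/-- Theorem 4.1: with Λ := min_i ( f(A i) + Δ(b∣A i) ) computed over the run of
MGreedy, f(OPT) ≤ Λ and α'·Λ ≤ f(S_m), where α' ∈ (0.357, 1) is the root of
(1 − α')·(ln(1 − α') + 2) − 1 = 0. -/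
theorem stmt11 {V : Type*} [Fintype V] [DecidableEq V] [Nonempty V]
    (f : Finset V → ℝ) (c : V → ℝ) (b : ℝ)
    (hf0 : f ∅ = 0)
    (hmono : ∀ S T : Finset V, S ⊆ T → f S ≤ f T)
    (hsub : ∀ S T : Finset V, f (S ∪ T) + f (S ∩ T) ≤ f S + f T)
    (hcpos : ∀ v : V, 0 < c v)
    (hb : 0 < b)
    (hcb : ∀ v : V, c v ≤ b)
    (u : Fin (Fintype.card V) → V) (hu : Function.Bijective u)
    (A : Fin (Fintype.card V + 1) → Finset V)
    (hA0 : A 0 = ∅)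
    (hstep : ∀ i : Fin (Fintype.card V),
      ((∑ v ∈ A i.castSucc, c v) + c (u i) ≤ b →
        A i.succ = insert (u i) (A i.castSucc)) ∧
      (¬ ((∑ v ∈ A i.castSucc, c v) + c (u i) ≤ b) →
        A i.succ = A i.castSucc))
    (hgreedy : ∀ i j : Fin (Fintype.card V), i ≤ j →
      (f (insert (u i) (A i.castSucc)) - f (A i.castSucc)) * c (u j) ≥
      (f (insert (u j) (A i.castSucc)) - f (A i.castSucc)) * c (u i))
    (OPT : Finset V) (hOPT : ∑ v ∈ OPT, c v ≤ b)
    (α : ℝ) (hα1 : 0.357 < α) (hα2 : α < 1)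
    (hαroot : (1 - α) * (Real.log (1 - α) + 2) - 1 = 0) :
    f OPT ≤ Finset.univ.inf' Finset.univ_nonempty
      (fun i : Fin (Fintype.card V + 1) => f (A i) + sSup {y : ℝ | ∃ x : V → ℝ,
        (∀ v : V, 0 ≤ x v ∧ x v ≤ 1) ∧
        (∑ v : V, c v * x v ≤ b) ∧
        y = ∑ v ∈ Finset.univ \ A i, (f (insert v (A i)) - f (A i)) * x v}) ∧
    α * Finset.univ.inf' Finset.univ_nonempty
      (fun i : Fin (Fintype.card V + 1) => f (A i) + sSup {y : ℝ | ∃ x : V → ℝ,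
        (∀ v : V, 0 ≤ x v ∧ x v ≤ 1) ∧
        (∑ v : V, c v * x v ≤ b) ∧
        y = ∑ v ∈ Finset.univ \ A i, (f (insert v (A i)) - f (A i)) * x v}) ≤
    max (f (A (Fin.last (Fintype.card V))))
      (Finset.univ.sup' Finset.univ_nonempty fun v : V => f {v}) :=
  stmt11_general f c b hf0 hmono hsub hcpos hb u hu A hA0 hstep hgreedy OPT hOPT α hα2 hαroot
end
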